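/- Let n ≥ 3 and 2 ≤ s ≤ n/2. Define f1(p) = (2s/n)p + 1 − 2s/n and f2(p) = ∏_{j=0}^{s−1} ((2/(n−j))p + 1 − 2/(n−j)). Then f1(1/2) = f2(1/2), f1(1) = f2(1) = 1, and f1(p) > f2(p) for all 1/2 < p < 1. -/

import Mathlib

open Finset

-- telescoping product at p = 1/2
lemma tele (N : ℝ) : ∀ m : ℕ, (m:ℝ) < N →
    ∏ j ∈ Finset.range m, ((2/(N - j)) * (1/2) + 1 - 2/(N - j)) = (N - m)/N := by
  intro m
  induction m with
  | zero => intro h; simp; field_simp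
  | succ m ih =>
    intro h
    have hm : (m:ℝ) < N := by push_cast at h ⊢; linarith
    have hNm : N - m ≠ 0 := by intro hc; push_cast at h; linarith [sub_eq_zero.mp hc]
    have hN : N ≠ 0 := by have : (0:ℝ) ≤ m := Nat.cast_nonneg m; intro hc; linarith
    rw [Finset.prod_range_succ, ih hm]
    push_cast
    field_simp
    ring

lemma step_ineq (N t : ℝ) (m : ℕ) (ht0 : 0 < t) (ht : t < 1/2)
    (hmN : 2*((m:ℝ)+1) ≤ N) (hm : 2 ≤ m) :
    (1 - 2*m*t/N) * (1 - 2*t/(N - m)) ≤ 1 - 2*(m+1)*t/N := by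
  have hm1 : (2:ℝ) ≤ m := by exact_mod_cast hm
  have hN : (0:ℝ) < N := by linarith
  have hNm : (0:ℝ) < N - m := by linarith
  have h1 : 1 - 2*m*t/N = (N - 2*m*t)/N := by field_simp
  have h2 : 1 - 2*t/(N-m) = (N - m - 2*t)/(N-m) := by field_simp
  have h3 : 1 - 2*(m+1)*t/N = (N - 2*(m+1)*t)/N := by field_simp
  rw [h1, h2, h3, div_mul_div_comm, div_le_div_iff₀ (by positivity) hN]
  nlinarith [mul_nonneg (mul_nonneg (mul_nonneg ht0.le (by linarith : (0:ℝ) ≤ 1 - 2*t)) (by linarith : (0:ℝ) ≤ (m:ℝ))) hN.le]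

lemma main_ineq (N t : ℝ) (ht0 : 0 < t) (ht : t < 1/2) :
    ∀ m : ℕ, 2 ≤ m → 2*(m:ℝ) ≤ N →
    ∏ j ∈ Finset.range m, (1 - 2*t/(N - j)) < 1 - 2*m*t/N := by
  intro m hm2
  induction m, hm2 using Nat.le_induction with
  | base =>
    intro hN4
    norm_num at hN4
    have hN : (0:ℝ) < N := by linarith
    have hN1 : (0:ℝ) < N - 1 := by linarith
    rw [Finset.prod_range_succ, Finset.prod_range_succ, Finset.prod_range_zero, one_mul]
    push_cast
    rw [sub_zero]
    have h1 : 1 - 2*t/N = (N - 2*t)/N := by field_simp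
    have h2 : 1 - 2*t/(N-1) = (N - 1 - 2*t)/(N-1) := by field_simp
    have h3 : (N - 4*t)/N = 1 - 2*2*t/N := by rw [sub_div, div_self hN.ne']; ring
    rw [h1, h2, ← h3, div_mul_div_comm, div_lt_div_iff₀ (by positivity) hN]
    nlinarith [mul_pos (mul_pos ht0 (by linarith : (0:ℝ) < 1 - 2*t)) hN]
  | succ m hm ih =>
    intro hmN
    have hm1 : (2:ℝ) ≤ m := by exact_mod_cast hm
    have hmN' : 2*((m:ℝ)+1) ≤ N := by push_cast at hmN; linarith
    have hN : (0:ℝ) < N := by linarith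
    have hNm : (0:ℝ) < N - m := by linarith
    have hfac : 0 < 1 - 2*t/(N - m) := by
      rw [sub_pos, div_lt_one hNm]; linarith
    rw [Finset.prod_range_succ]
    have h1 : (∏ j ∈ Finset.range m, (1 - 2*t/(N - j))) * (1 - 2*t/(N - m))
        < (1 - 2*m*t/N) * (1 - 2*t/(N - m)) :=
      mul_lt_mul_of_pos_right (ih (by linarith)) hfac
    have h2 := step_ineq N t m ht0 ht hmN' hm
    push_cast
    calc _ < (1 - 2*m*t/N) * (1 - 2*t/(N - m)) := h1
    _ ≤ 1 - 2*((m:ℝ)+1)*t/N := h2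

theorem stmt_8 (n s : ℕ) (hn : 3 ≤ n) (hs : 2 ≤ s) (hsn : 2 * s ≤ n) :
    let f1 : ℝ → ℝ := fun p => (2*s/n) * p + 1 - 2*s/n
    let f2 : ℝ → ℝ := fun p => ∏ j ∈ Finset.range s, ((2/((n:ℝ) - j)) * p + 1 - 2/((n:ℝ) - j))
    f1 (1/2) = f2 (1/2) ∧ f1 1 = 1 ∧ f2 1 = 1 ∧
    ∀ p : ℝ, 1/2 < p → p < 1 → f2 p < f1 p := by
  intro f1 f2
  have hN : (3:ℝ) ≤ n := by exact_mod_cast hn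
  have hsN : 2*(s:ℝ) ≤ n := by exact_mod_cast hsn
  have hs2 : (2:ℝ) ≤ s := by exact_mod_cast hs
  have hsn' : (s:ℝ) < n := by linarith
  have hjne : ∀ j ∈ Finset.range s, (n:ℝ) - j ≠ 0 := by
    intro j hj
    have : (j:ℝ) < s := by exact_mod_cast Finset.mem_range.mp hj
    intro hc; nlinarith [sub_eq_zero.mp hc]
  refine ⟨?_, ?_, ?_, ?_⟩
  · simp only [f1]
    rw [show f2 (1/2) = ((n:ℝ) - s)/n from tele (n:ℝ) s hsn']
    have hn0 : (n:ℝ) ≠ 0 := by linarith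
    field_simp
    ring
  · simp only [f1]; ring
  · show f2 1 = 1
    apply Finset.prod_eq_one
    intro j hj
    have := hjne j hj
    field_simp
    ring
  · intro p hp1 hp2
    set t := 1 - p with htdef
    have ht0 : 0 < t := by simp [htdef]; linarith
    have ht : t < 1/2 := by simp [htdef]; linarith
    have heq : f2 p = ∏ j ∈ Finset.range s, (1 - 2*t/((n:ℝ) - j)) := by
      apply Finset.prod_congr rfl
      intro j hj
      have := hjne j hj
      field_simp
      ring
    have heq1 : f1 p = 1 - 2*(s:ℝ)*t/n := by
      have hn0 : (n:ℝ) ≠ 0 := by linarith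
      simp only [f1, htdef]
      field_simp
      ring
    rw [heq, heq1]
    exact main_ineq (n:ℝ) t ht0 ht s hs hsN
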